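/- arXiv:2509.25978 — 12 statements merged into one kernel-verified Lean document; each statement's English description precedes it below -/
import Mathlib

section
/- Let n ≥ 1 and u ∈ D. The matrix N(u) ∈ ℝ^{n×n} with entries N_ij = δ_ij u_i − u_i u_j is the two-sided inverse of the matrix H(u) ∈ ℝ^{n×n} with entries H_ij = δ_ij/u_i + 1/u_0; that is, H(u)·N(u) = N(u)·H(u) = Id. -/
/-- The matrix `N(u)` with entries `δ_ij u_i - u_i u_j` is the two-sided
inverse of the Hessian matrix `H(u)` with entries `δ_ij / u_i + 1 / u_0`. -/
theorem entropy_hessian_inverse (n : ℕ) (hn : 1 ≤ n) (u : Fin n → ℝ)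
    (hu : ∀ i, 0 < u i ∧ u i < 1) (hsum : ∑ i, u i < 1) :
    let u0 : ℝ := 1 - ∑ i, u i
    let H : Matrix (Fin n) (Fin n) ℝ :=
      Matrix.of fun i j => (if i = j then 1 / u i else 0) + 1 / u0
    let N : Matrix (Fin n) (Fin n) ℝ :=
      Matrix.of fun i j => (if i = j then u i else 0) - u i * u j
    H * N = 1 ∧ N * H = 1 := by
  intro u0 H N
  have hu0eq : u0 = 1 - ∑ i, u i := rfl
  have hu0 : (0:ℝ) < u0 := by rw [hu0eq]; linarith
  have hu0' : u0 ≠ 0 := ne_of_gt hu0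
  have hS : (1:ℝ) - ∑ i, u i ≠ 0 := by rw [← hu0eq]; exact hu0'
  have hui : ∀ i, u i ≠ 0 := fun i => ne_of_gt (hu i).1
  constructor
  · ext i j
    simp only [H, N, Matrix.mul_apply, Matrix.of_apply, Matrix.one_apply]
    have key : ∀ k, ((if i = k then 1 / u i else 0) + 1 / u0) *
        ((if k = j then u k else 0) - u k * u j)
        = (if k = i then ((if i = j then 1 else 0) - u j) else 0)
          + ((if k = j then u j / u0 else 0) + (-(u j / u0)) * u k) := by
      intro k
      rcases eq_or_ne i k with rfl | h1
      · rcases eq_or_ne i j with rfl | h2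
        · simp only [if_pos rfl, eq_self_iff_true, if_true]; field_simp [hui, hu0']; ring
        · simp only [if_pos rfl, if_neg h2, eq_self_iff_true, if_true]; field_simp [hui, hu0']; ring
      · rcases eq_or_ne k j with rfl | h2
        · simp only [if_neg h1, if_neg (Ne.symm h1), if_pos rfl, eq_self_iff_true, if_true]
          field_simp [hui, hu0']; ring
        · simp only [if_neg h1, if_neg (Ne.symm h1), if_neg h2]
          ring
    simp only [key]
    rw [Finset.sum_add_distrib, Finset.sum_add_distrib, Finset.sum_ite_eq',
      Finset.sum_ite_eq', ← Finset.mul_sum]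
    simp only [Finset.mem_univ, if_true]
    rcases eq_or_ne i j with rfl | h
    · simp only [if_pos rfl]; rw [hu0eq]; field_simp [hui, hu0']; ring
    · simp only [if_neg h]; rw [hu0eq]; field_simp [hui, hu0']; ring
  · ext i j
    simp only [H, N, Matrix.mul_apply, Matrix.of_apply, Matrix.one_apply]
    have key : ∀ k, ((if i = k then u i else 0) - u i * u k) *
        ((if k = j then 1 / u k else 0) + 1 / u0)
        = (if k = i then ((if i = j then 1 else 0) + u i / u0) else 0)
          + ((if k = j then -(u i) else 0) + (-(u i / u0)) * u k) := by
      intro k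
      rcases eq_or_ne i k with rfl | h1
      · rcases eq_or_ne i j with rfl | h2
        · simp only [if_pos rfl, eq_self_iff_true, if_true]; field_simp [hui, hu0']; ring
        · simp only [if_pos rfl, if_neg h2, eq_self_iff_true, if_true]; field_simp [hui, hu0']; ring
      · rcases eq_or_ne k j with rfl | h2
        · simp only [if_neg h1, if_neg (Ne.symm h1), if_pos rfl, eq_self_iff_true, if_true]
          field_simp [hui, hu0']; ring
        · simp only [if_neg h1, if_neg (Ne.symm h1), if_neg h2]
          ring
    simp only [key]
    rw [Finset.sum_add_distrib, Finset.sum_add_distrib, Finset.sum_ite_eq',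
      Finset.sum_ite_eq', ← Finset.mul_sum]
    simp only [Finset.mem_univ, if_true]
    rcases eq_or_ne i j with rfl | h
    · simp only [if_pos rfl]; rw [hu0eq]; field_simp [hui, hu0']; ring
    · simp only [if_neg h]; rw [hu0eq]; field_simp [hui, hu0']; ring
end

section
/- Let n ≥ 1, B ∈ ℝ^{n×n}, u ∈ D, and let G(ū) ∈ ℝ^{(n+1)×(n+1)} have entries G_ij = B̄_ij/√(u_i u_j). Then P_L(ū)·G(ū) = G(ū)·P_L(ū) = G(ū), where P_L(ū) is the matrix of the map Y ↦ Y − (Σ_{k=0}^n √u_k Y_k)·(√u_0,…,√u_n). -/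
open Matrix

/-- The augmented matrix `B̄ ∈ ℝ^{(n+1)×(n+1)}` (indices `0,…,n`) of `B ∈ ℝ^{n×n}`. -/
noncomputable def augment {n : ℕ} (B : Matrix (Fin n) (Fin n) ℝ) :
    Matrix (Fin (n + 1)) (Fin (n + 1)) ℝ :=
  Matrix.of fun i j =>
    Fin.cases
      (Fin.cases (∑ k, ∑ l, B k l) (fun l => -∑ k, B k l) j)
      (fun k => Fin.cases (-∑ l, B k l) (fun l => B k l) j) i

lemma augment_colsum {n : ℕ} (B : Matrix (Fin n) (Fin n) ℝ) (j : Fin (n + 1)) :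
    ∑ i, augment B i j = 0 := by
  induction j using Fin.cases with
  | zero =>
    rw [Fin.sum_univ_succ]
    simp [augment]
  | succ l =>
    rw [Fin.sum_univ_succ]
    simp [augment]

lemma augment_rowsum {n : ℕ} (B : Matrix (Fin n) (Fin n) ℝ) (i : Fin (n + 1)) :
    ∑ j, augment B i j = 0 := by
  induction i using Fin.cases with
  | zero =>
    rw [Fin.sum_univ_succ]
    simp only [augment, Matrix.of_apply, Fin.cases_zero, Fin.cases_succ]
    rw [Finset.sum_neg_distrib, Finset.sum_comm]
    ring
  | succ k =>
    rw [Fin.sum_univ_succ]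
    simp [augment]

/-- `P_L(ū)·G(ū) = G(ū)·P_L(ū) = G(ū)`, where `G_ij = B̄_ij/√(u_i u_j)`
and `P_L(ū)` is the matrix of the map `Y ↦ Y - (∑_k √u_k Y_k)·√ū`. -/
theorem projection_commutes_with_G (n : ℕ) (hn : 1 ≤ n)
    (B : Matrix (Fin n) (Fin n) ℝ)
    (u : Fin n → ℝ) (hu : ∀ i, 0 < u i ∧ u i < 1) (hsum : ∑ i, u i < 1) :
    let u0 : ℝ := 1 - ∑ i, u i
    let ubar : Fin (n + 1) → ℝ := Fin.cons u0 u
    let G : Matrix (Fin (n + 1)) (Fin (n + 1)) ℝ :=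
      Matrix.of fun i j => augment B i j / Real.sqrt (ubar i * ubar j)
    let P : Matrix (Fin (n + 1)) (Fin (n + 1)) ℝ := Matrix.of fun i j =>
      (if i = j then 1 else 0) - Real.sqrt (ubar i) * Real.sqrt (ubar j)
    (∀ Y, P.mulVec Y = fun i => Y i - (∑ k, Real.sqrt (ubar k) * Y k) * Real.sqrt (ubar i)) ∧
      P * G = G ∧ G * P = G := by
  intro u0 ubar G P
  have hubar : ∀ i, 0 < ubar i := by
    intro i
    induction i using Fin.cases with
    | zero => simpa [ubar, u0] using hsum
    | succ k => simpa [ubar] using (hu k).1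
  have hsq : ∀ i, Real.sqrt (ubar i) ≠ 0 := fun i =>
    Real.sqrt_ne_zero'.2 (hubar i)
  have hGsplit : ∀ i j, G i j = augment B i j / (Real.sqrt (ubar i) * Real.sqrt (ubar j)) := by
    intro i j
    simp [G, Real.sqrt_mul (hubar i).le]
  have hcol : ∀ j, ∑ i, Real.sqrt (ubar i) * G i j = 0 := by
    intro j
    have : ∀ i, Real.sqrt (ubar i) * G i j = augment B i j / Real.sqrt (ubar j) := by
      intro i
      rw [hGsplit]
      field_simp
      rw [← div_div, mul_div_cancel_left₀ _ (hsq i)]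
    rw [Finset.sum_congr rfl fun i _ => this i, ← Finset.sum_div, augment_colsum]
    simp
  have hrow : ∀ i, ∑ j, G i j * Real.sqrt (ubar j) = 0 := by
    intro i
    have : ∀ j, G i j * Real.sqrt (ubar j) = augment B i j / Real.sqrt (ubar i) := by
      intro j
      rw [hGsplit]
      field_simp
      rw [mul_comm (Real.sqrt (ubar i)) (Real.sqrt (ubar j)), ← div_div,
        mul_div_cancel_right₀ _ (hsq j)]
    rw [Finset.sum_congr rfl fun j _ => this j, ← Finset.sum_div, augment_rowsum]
    simp
  refine ⟨?_, ?_, ?_⟩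
  · intro Y
    funext i
    simp only [Matrix.mulVec, dotProduct, P, Matrix.of_apply, sub_mul, ite_mul, one_mul,
      zero_mul, Finset.sum_sub_distrib, Finset.sum_ite_eq, Finset.mem_univ, if_true]
    rw [Finset.sum_mul]
    congr 1
    apply Finset.sum_congr rfl
    intro k _
    ring
  · ext i j
    rw [Matrix.mul_apply]
    have : ∀ k, P i k * G k j =
        (if i = k then G k j else 0) - Real.sqrt (ubar i) * (Real.sqrt (ubar k) * G k j) := by
      intro k
      simp only [P, Matrix.of_apply]
      by_cases h : i = k <;> simp [h] <;> ring
    rw [Finset.sum_congr rfl fun k _ => this k, Finset.sum_sub_distrib,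
      Finset.sum_ite_eq, ← Finset.mul_sum, hcol]
    simp
  · ext i j
    rw [Matrix.mul_apply]
    have : ∀ k, G i k * P k j =
        (if k = j then G i k else 0) - (G i k * Real.sqrt (ubar k)) * Real.sqrt (ubar j) := by
      intro k
      simp only [P, Matrix.of_apply]
      by_cases h : k = j <;> simp [h] <;> ring
    rw [Finset.sum_congr rfl fun k _ => this k, Finset.sum_sub_distrib,
      Finset.sum_ite_eq', ← Finset.sum_mul, hrow]
    simp
end

section
/- Let n ≥ 1, B ∈ ℝ^{n×n}, u ∈ D, and let G(ū) have entries G_ij = B̄_ij/√(u_i u_j) for i,j = 0,…,n. Then for every z = (z_0, z_1, …, z_n) ∈ ℝ^{n+1}: z^T G(ū) z = Σ_{i,j=1}^n (z_0/√u_0 − z_i/√u_i) · B_ij · (z_0/√u_0 − z_j/√u_j). -/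
open Matrix

/-- for every `z ∈ ℝ^{n+1}`,
`zᵀ G(ū) z = ∑_{i,j=1}^n (z_0/√u_0 - z_i/√u_i) B_ij (z_0/√u_0 - z_j/√u_j)`,
where `G_ij = B̄_ij / √(u_i u_j)`. -/
theorem quadratic_form_G (n : ℕ) (hn : 1 ≤ n)
    (B : Matrix (Fin n) (Fin n) ℝ)
    (u : Fin n → ℝ) (hu : ∀ i, 0 < u i ∧ u i < 1) (hsum : ∑ i, u i < 1) :
    let u0 : ℝ := 1 - ∑ i, u i
    let ubar : Fin (n + 1) → ℝ := Fin.cons u0 u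
    let G : Matrix (Fin (n + 1)) (Fin (n + 1)) ℝ :=
      Matrix.of fun i j => augment B i j / Real.sqrt (ubar i * ubar j)
    ∀ z : Fin (n + 1) → ℝ,
      z ⬝ᵥ G.mulVec z =
        ∑ i : Fin n, ∑ j : Fin n,
          (z 0 / Real.sqrt u0 - z i.succ / Real.sqrt (u i)) * B i j *
            (z 0 / Real.sqrt u0 - z j.succ / Real.sqrt (u j)) := by
  intro u0 ubar G z
  have hu0 : 0 < u0 := by simp only [u0]; linarith
  have hubar : ∀ i, 0 < ubar i := by
    intro i
    refine Fin.cases ?_ ?_ i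
    · simpa [ubar] using hu0
    · intro k; simpa [ubar] using (hu k).1
  have hsqrt : ∀ i, Real.sqrt (ubar i) ≠ 0 := fun i =>
    ne_of_gt (Real.sqrt_pos.mpr (hubar i))
  have key : ∀ i j, z i * (G i j * z j) =
      (z i / Real.sqrt (ubar i)) * augment B i j * (z j / Real.sqrt (ubar j)) := by
    intro i j
    have : Real.sqrt (ubar i * ubar j) = Real.sqrt (ubar i) * Real.sqrt (ubar j) :=
      Real.sqrt_mul (le_of_lt (hubar i)) _
    simp only [G, Matrix.of_apply, this]
    field_simp
  have hLHS : z ⬝ᵥ G.mulVec z =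
      ∑ i, ∑ j, (z i / Real.sqrt (ubar i)) * augment B i j * (z j / Real.sqrt (ubar j)) := by
    simp only [dotProduct, Matrix.mulVec, dotProduct, Finset.mul_sum]
    exact Finset.sum_congr rfl fun i _ => Finset.sum_congr rfl fun j _ => key i j
  rw [hLHS]
  have hub0 : ubar 0 = u0 := rfl
  have hubs : ∀ i : Fin n, ubar i.succ = u i := fun i => rfl
  set a0 : ℝ := z 0 / Real.sqrt u0 with ha0
  set a : Fin n → ℝ := fun i => z i.succ / Real.sqrt (u i) with ha
  have haug00 : augment B 0 0 = ∑ k, ∑ l, B k l := rfl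
  have haug0j : ∀ j : Fin n, augment B 0 j.succ = -∑ k, B k j := fun j => rfl
  have haugi0 : ∀ i : Fin n, augment B i.succ 0 = -∑ l, B i l := fun i => rfl
  have haugij : ∀ i j : Fin n, augment B i.succ j.succ = B i j := fun i j => rfl
  rw [Fin.sum_univ_succ]
  rw [Fin.sum_univ_succ]
  simp only [Fin.sum_univ_succ, haug00, haug0j, haugi0, haugij, hub0, hubs, ← ha0, ← ha]
  simp only [sub_mul, mul_sub, Finset.sum_sub_distrib, Finset.mul_sum, Finset.sum_mul,
    neg_mul, mul_neg, Finset.sum_neg_distrib]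
  rw [Finset.sum_comm (f := fun x i => a0 * B i x * (z x.succ / Real.sqrt (u x)))]
  rw [Finset.sum_add_distrib]
  simp only [Finset.sum_neg_distrib]
  abel
end

section
/- Let n ≥ 1, u ∈ D, c_A > 0 and s ∈ (0,1]. Let A ∈ ℝ^{n×n} satisfy z^T H(u) A z ≥ c_A Σ_{i=1}^n u_i^{2s−2} z_i² for all z ∈ ℝ^n, where H(u) has entries H_ij = δ_ij/u_i + 1/u_0. Set B = A·H(u)^{−1} and let G(ū) have entries G_ij = B̄_ij/√(u_i u_j), i,j = 0,…,n. Then for every z ∈ ℝ^{n+1} with Σ_{i=0}^n √u_i z_i = 0 one has z^T G(ū) z ≥ c_A Σ_{i=1}^n u_i^{2s−1} z_i². -/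
open Matrix

lemma aug_quadratic {n : ℕ} (B : Matrix (Fin n) (Fin n) ℝ) (g : Fin (n + 1) → ℝ) :
    ∑ i, ∑ j, augment B i j * g i * g j
      = ∑ k, (g k.succ - g 0) * ∑ l, B k l * (g l.succ - g 0) := by
  have hrow : ∀ k : Fin n, ∑ j, augment B k.succ j * g k.succ * g j
      = g k.succ * ∑ l, B k l * (g l.succ - g 0) := by
    intro k
    rw [Fin.sum_univ_succ]
    simp only [augment, Matrix.of_apply, Fin.cases_zero, Fin.cases_succ]
    rw [neg_mul, neg_mul, Finset.sum_mul, Finset.sum_mul, neg_add_eq_sub,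
      ← Finset.sum_sub_distrib, Finset.mul_sum]
    exact Finset.sum_congr rfl fun l _ => by ring
  have hrow0 : ∑ j, augment B (0 : Fin (n + 1)) j * g 0 * g j
      = ∑ k, (-(g 0)) * ∑ l, B k l * (g l.succ - g 0) := by
    rw [Fin.sum_univ_succ]
    simp only [augment, Matrix.of_apply, Fin.cases_zero, Fin.cases_succ]
    rw [Finset.sum_mul, Finset.sum_mul,
      show ∑ x : Fin n, (-∑ k, B k x) * g 0 * g x.succ
          = ∑ x : Fin n, ∑ k, -(B k x * g 0 * g x.succ) from
        Finset.sum_congr rfl fun x _ => by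
          rw [neg_mul, neg_mul, Finset.sum_mul, Finset.sum_mul, ← Finset.sum_neg_distrib],
      Finset.sum_comm, ← Finset.sum_add_distrib]
    refine Finset.sum_congr rfl fun k _ => ?_
    rw [Finset.sum_mul, Finset.sum_mul, Finset.mul_sum, ← Finset.sum_add_distrib]
    refine Finset.sum_congr rfl fun l _ => ?_
    ring
  rw [Fin.sum_univ_succ, hrow0]
  rw [Finset.sum_congr rfl fun k _ => hrow k, ← Finset.sum_add_distrib]
  exact Finset.sum_congr rfl fun k _ => by ring


/-- if `zᵀ H(u) A z ≥ c_A ∑ u_i^{2s-2} z_i²` for all `z ∈ ℝ^n`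
(`0 < c_A`, `s ∈ (0,1]`), `B = A·H(u)⁻¹`, and `G_ij = B̄_ij/√(u_i u_j)`, then for
every `z ∈ ℝ^{n+1}` with `∑ √u_i z_i = 0`: `zᵀ G(ū) z ≥ c_A ∑ u_i^{2s-1} z_i²`. -/
theorem G_positive_definite_on_L (n : ℕ) (hn : 1 ≤ n) (u : Fin n → ℝ)
    (hu : ∀ i, 0 < u i ∧ u i < 1) (hsum : ∑ i, u i < 1)
    (cA s : ℝ) (hcA : 0 < cA) (hs : s ∈ Set.Ioc (0 : ℝ) 1)
    (A H : Matrix (Fin n) (Fin n) ℝ)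
    (hH : H = Matrix.of fun i j =>
      (if i = j then 1 / u i else 0) + 1 / (1 - ∑ k, u k))
    (hA : ∀ z : Fin n → ℝ,
      cA * ∑ i, u i ^ (2 * s - 2) * z i ^ 2 ≤ z ⬝ᵥ (H * A).mulVec z)
    (z : Fin (n + 1) → ℝ)
    (hz : ∑ i, Real.sqrt ((Fin.cons (1 - ∑ k, u k) u : Fin (n + 1) → ℝ) i) * z i = 0) :
    cA * ∑ i : Fin n, u i ^ (2 * s - 1) * z i.succ ^ 2 ≤
      z ⬝ᵥ (Matrix.of fun i j =>
          augment (A * H⁻¹) i j /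
            Real.sqrt ((Fin.cons (1 - ∑ k, u k) u : Fin (n + 1) → ℝ) i *
              (Fin.cons (1 - ∑ k, u k) u : Fin (n + 1) → ℝ) j)).mulVec z := by
  have hupos : ∀ i, 0 < u i := fun i => (hu i).1
  have hu0 : (0 : ℝ) < 1 - ∑ k, u k := by linarith
  set u0 : ℝ := 1 - ∑ k, u k with hu0def
  set ub : Fin (n + 1) → ℝ := Fin.cons u0 u with hub
  have hubpos : ∀ i, 0 < ub i := by
    intro i
    induction i using Fin.cases with
    | zero => simpa [hub] using hu0
    | succ k => simpa [hub] using hupos k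
  have hsqpos : ∀ i, 0 < Real.sqrt (ub i) := fun i => Real.sqrt_pos.2 (hubpos i)
  have hsqupos : ∀ i, 0 < Real.sqrt (u i) := fun i => Real.sqrt_pos.2 (hupos i)
  have hS : ∑ k, u k = 1 - u0 := by rw [hu0def]; ring
  -- explicit inverse of H
  set K : Matrix (Fin n) (Fin n) ℝ :=
    Matrix.of (fun i j => (if i = j then u i else 0) - u i * u j) with hK
  have hHK : H * K = 1 := by
    ext i j
    simp only [hH, hK, Matrix.mul_apply, Matrix.of_apply, Matrix.one_apply]
    have hrw : ∀ k : Fin n, ((if i = k then 1 / u i else 0) + 1 / u0) *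
        ((if k = j then u k else 0) - u k * u j)
        = (if i = k then (1 / u i) * ((if k = j then u k else 0) - u k * u j) else 0)
          + ((if k = j then u k / u0 else 0) - (u j / u0) * u k) := by
      intro k
      split_ifs <;> ring
    rw [Finset.sum_congr rfl fun k _ => hrw k, Finset.sum_add_distrib,
      Finset.sum_ite_eq, Finset.sum_sub_distrib, Finset.sum_ite_eq', ← Finset.mul_sum, hS]
    simp only [Finset.mem_univ, if_true]
    have h1 : u i ≠ 0 := (hupos i).ne'
    have h1' : u j ≠ 0 := (hupos j).ne'
    have h2 : u0 ≠ 0 := hu0.ne'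
    split_ifs with h
    · subst h
      field_simp
      ring
    · field_simp
      ring
  have hHinv : H⁻¹ = K := Matrix.inv_eq_right_inv hHK
  -- the vectors
  set g : Fin (n + 1) → ℝ := fun i => z i / Real.sqrt (ub i) with hg
  set v : Fin n → ℝ := fun k => g k.succ - g 0 with hv
  set w : Fin n → ℝ := fun k => Real.sqrt (u k) * z k.succ with hw
  have hub0 : ub 0 = u0 := rfl
  have hubsucc : ∀ k : Fin n, ub k.succ = u k := fun k => rfl
  -- constraint
  have hz' : Real.sqrt u0 * z 0 + ∑ k : Fin n, Real.sqrt (u k) * z k.succ = 0 := by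
    rw [Fin.sum_univ_succ] at hz
    simpa [hub] using hz
  have hsqsq : ∀ k, Real.sqrt (u k) * Real.sqrt (u k) = u k :=
    fun k => Real.mul_self_sqrt (hupos k).le
  have huv : ∀ k, u k * v k = Real.sqrt (u k) * z k.succ - u k * g 0 := by
    intro k
    have hne : Real.sqrt (u k) ≠ 0 := (hsqupos k).ne'
    simp only [hv, hg, hubsucc]
    rw [mul_sub]
    congr 1
    rw [← mul_div_assoc, div_eq_iff hne]
    linear_combination (-z k.succ) * hsqsq k
  have hsumuv : ∑ k, u k * v k = -g 0 := by
    rw [Finset.sum_congr rfl fun k _ => huv k, Finset.sum_sub_distrib, ← Finset.sum_mul]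
    have hg0 : Real.sqrt u0 * z 0 = u0 * g 0 := by
      have hne : Real.sqrt u0 ≠ 0 := (Real.sqrt_pos.2 hu0).ne'
      simp only [hg, hub0]
      rw [← mul_div_assoc, eq_div_iff hne]
      linear_combination z 0 * Real.mul_self_sqrt hu0.le
    have h1 : ∑ k : Fin n, Real.sqrt (u k) * z k.succ = -(u0 * g 0) := by
      rw [← hg0]; linarith
    rw [h1, hS]; ring
  have hKv : K.mulVec v = w := by
    funext i
    simp only [Matrix.mulVec, dotProduct, hK, Matrix.of_apply]
    have e1 : ∀ j, ((if i = j then u i else 0) - u i * u j) * v j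
        = (if i = j then u i * v j else 0) - u i * (u j * v j) := by
      intro j
      split_ifs <;> ring
    rw [Finset.sum_congr rfl fun j _ => e1 j, Finset.sum_sub_distrib, Finset.sum_ite_eq,
      ← Finset.mul_sum, hsumuv]
    simp only [Finset.mem_univ, if_true]
    have h2 := huv i
    simp only [hw]
    linarith
  have hHw : H.mulVec w = v := by
    rw [← hKv, Matrix.mulVec_mulVec, hHK, Matrix.one_mulVec]
  have hHsymm : Hᵀ = H := by
    ext i j
    simp only [hH, Matrix.transpose_apply, Matrix.of_apply]
    by_cases h : i = j <;> simp [h, eq_comm]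
  -- rewrite the RHS
  have hrhs : z ⬝ᵥ (Matrix.of fun i j =>
          augment (A * H⁻¹) i j / Real.sqrt (ub i * ub j)).mulVec z
      = w ⬝ᵥ (H * A).mulVec w := by
    have step1 : z ⬝ᵥ (Matrix.of fun i j =>
          augment (A * H⁻¹) i j / Real.sqrt (ub i * ub j)).mulVec z
        = ∑ i, ∑ j, augment (A * K) i j * g i * g j := by
      rw [hHinv]
      simp only [dotProduct, Matrix.mulVec, Matrix.of_apply]
      refine Finset.sum_congr rfl fun i _ => ?_
      rw [Finset.mul_sum]
      refine Finset.sum_congr rfl fun j _ => ?_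
      rw [Real.sqrt_mul (hubpos i).le]
      have h1 : Real.sqrt (ub i) ≠ 0 := (hsqpos i).ne'
      have h2 : Real.sqrt (ub j) ≠ 0 := (hsqpos j).ne'
      simp only [hg]
      field_simp
      try ring
    rw [step1, aug_quadratic]
    have step2 : ∑ k, (g k.succ - g 0) * ∑ l, (A * K) k l * (g l.succ - g 0)
        = v ⬝ᵥ (A * K).mulVec v := by
      simp only [dotProduct, Matrix.mulVec, hv]
      try exact Finset.sum_congr rfl fun k _ => by rw [Finset.mul_sum]
    rw [step2, ← Matrix.mulVec_mulVec, hKv, ← hHw]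
    rw [show w ⬝ᵥ (H * A).mulVec w = (H.mulVec w) ⬝ᵥ (A.mulVec w) from by
      rw [← Matrix.mulVec_mulVec, Matrix.dotProduct_mulVec, ← Matrix.mulVec_transpose, hHsymm]]
  -- conclude
  rw [hrhs]
  calc cA * ∑ i : Fin n, u i ^ (2 * s - 1) * z i.succ ^ 2
      = cA * ∑ i, u i ^ (2 * s - 2) * w i ^ 2 := by
        congr 1
        refine Finset.sum_congr rfl fun i _ => ?_
        simp only [hw]
        rw [mul_pow, Real.sq_sqrt (hupos i).le,
          show (2 * s - 1 : ℝ) = (2 * s - 2) + 1 by ring,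
          Real.rpow_add (hupos i), Real.rpow_one]
        ring
    _ ≤ w ⬝ᵥ (H * A).mulVec w := hA w
end

section
/- For all y ∈ [0,1] and z ∈ (0,1] (with the convention 0·log 0 = 0), one has y·log(y/z) − y + z ≥ (1/2)·(y − z)²/max{y, z}. -/
open Real Set

-- derivative of f x = log x - x/2 + 1/(2x)
lemma auxA_deriv (x : ℝ) (hx : 0 < x) :
    HasDerivAt (fun x : ℝ => Real.log x - x / 2 + 1 / (2 * x))
      (-(x - 1) ^ 2 / (2 * x ^ 2)) x := by
  have h1 := Real.hasDerivAt_log (ne_of_gt hx)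
  have h2 : HasDerivAt (fun x : ℝ => x / 2) (1 / 2) x := (hasDerivAt_id x).div_const 2
  have h3 : HasDerivAt (fun x : ℝ => 2 * x) 2 x := by
    simpa using (hasDerivAt_id x).const_mul 2
  have h4 : HasDerivAt (fun x : ℝ => 1 / (2 * x)) (-2 / (2 * x) ^ 2) x := by
    have := h3.inv (by positivity)
    simp only [one_div]
    exact this
  have := (h1.sub h2).add h4
  refine HasDerivAt.congr_deriv this ?_
  field_simp
  ring

lemma auxA (t : ℝ) (ht : 0 < t) (ht1 : t ≤ 1) : t / 2 - 1 / (2 * t) ≤ Real.log t := by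
  set f : ℝ → ℝ := fun x => Real.log x - x / 2 + 1 / (2 * x) with hf
  have hanti : AntitoneOn f (Icc t 1) := by
    apply antitoneOn_of_deriv_nonpos (convex_Icc t 1)
    · apply ContinuousOn.add (ContinuousOn.sub ?_ ?_) ?_
      · exact Real.continuousOn_log.mono (fun x hx => by
          simp only [mem_compl_iff, mem_singleton_iff]
          exact ne_of_gt (lt_of_lt_of_le ht hx.1))
      · fun_prop
      · apply ContinuousOn.div continuousOn_const (by fun_prop)
        intro x hx
        have : 0 < x := lt_of_lt_of_le ht hx.1
        positivity
    · intro x hx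
      rw [interior_Icc] at hx
      have hx0 : 0 < x := lt_trans ht hx.1
      exact (auxA_deriv x hx0).differentiableAt.differentiableWithinAt
    · intro x hx
      rw [interior_Icc] at hx
      have hx0 : 0 < x := lt_trans ht hx.1
      rw [(auxA_deriv x hx0).deriv]
      rw [neg_div]
      have : (0:ℝ) ≤ (x - 1) ^ 2 / (2 * x ^ 2) := by positivity
      linarith
  have h1 : f 1 ≤ f t := by
    apply hanti (by constructor <;> linarith) (by constructor <;> linarith) ht1
  have : f 1 = 0 := by simp [hf]
  have := h1.trans_eq' this
  simp only [hf] at this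
  linarith

lemma auxB_deriv (x : ℝ) (hx : 0 < x) :
    HasDerivAt (fun x : ℝ => x * Real.log x - x + 1 - (x - 1) ^ 2 / (2 * x))
      (Real.log x - (x ^ 2 - 1) / (2 * x ^ 2)) x := by
  have h1 : HasDerivAt (fun x : ℝ => x * Real.log x) (Real.log x + 1) x := by
    have := (hasDerivAt_id x).mul (Real.hasDerivAt_log (ne_of_gt hx))
    refine HasDerivAt.congr_deriv this ?_
    field_simp
    simp only [id]
    ring
  have h2 : HasDerivAt (fun x : ℝ => (x - 1) ^ 2) (2 * (x - 1)) x := by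
    have := ((hasDerivAt_id x).sub_const 1).pow 2
    refine HasDerivAt.congr_deriv this ?_
    simp [id]
  have h3 : HasDerivAt (fun x : ℝ => 2 * x) 2 x := by
    simpa using (hasDerivAt_id x).const_mul 2
  have h4 : HasDerivAt (fun x : ℝ => (x - 1) ^ 2 / (2 * x))
      ((2 * (x - 1) * (2 * x) - (x - 1) ^ 2 * 2) / (2 * x) ^ 2) x :=
    h2.div h3 (by positivity)
  have := ((h1.sub (hasDerivAt_id x)).add_const 1).sub h4
  refine HasDerivAt.congr_deriv this ?_
  field_simp
  ring

lemma auxB (t : ℝ) (ht : 1 ≤ t) : (t - 1) ^ 2 / (2 * t) ≤ t * Real.log t - t + 1 := by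
  set g : ℝ → ℝ := fun x => x * Real.log x - x + 1 - (x - 1) ^ 2 / (2 * x) with hg
  have hmono : MonotoneOn g (Icc 1 t) := by
    apply monotoneOn_of_deriv_nonneg (convex_Icc 1 t)
    · intro x hx
      have hx0 : (0:ℝ) < x := lt_of_lt_of_le one_pos hx.1
      exact (auxB_deriv x hx0).differentiableAt.continuousAt.continuousWithinAt
    · intro x hx
      rw [interior_Icc] at hx
      have hx0 : (0:ℝ) < x := lt_trans one_pos hx.1
      exact (auxB_deriv x hx0).differentiableAt.differentiableWithinAt
    · intro x hx
      rw [interior_Icc] at hx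
      have hx1 : (1:ℝ) < x := hx.1
      have hx0 : (0:ℝ) < x := lt_trans one_pos hx1
      rw [(auxB_deriv x hx0).deriv]
      have hlog : 1 - x⁻¹ ≤ Real.log x := by
        have := Real.log_le_sub_one_of_pos (inv_pos.mpr hx0)
        rw [Real.log_inv] at this
        linarith
      have h5 : (x ^ 2 - 1) / (2 * x ^ 2) ≤ 1 - x⁻¹ := by
        rw [div_le_iff₀ (by positivity)]
        have : x⁻¹ * x = 1 := inv_mul_cancel₀ (ne_of_gt hx0)
        nlinarith [sq_nonneg (x - 1)]
      linarith
  have h1 : g 1 ≤ g t := hmono (by constructor <;> linarith) (by constructor <;> linarith) ht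
  have h2 : g 1 = 0 := by simp [hg]
  have := h2 ▸ h1
  simp only [hg] at this
  linarith

/-- for all `y ∈ [0,1]` and `z ∈ (0,1]`,
`y log(y/z) - y + z ≥ (1/2)(y - z)²/max{y,z}` (with `0·log 0 = 0`). -/
theorem relative_entropy_pointwise_lower_bound (y z : ℝ)
    (hy : y ∈ Set.Icc (0 : ℝ) 1) (hz : z ∈ Set.Ioc (0 : ℝ) 1) :
    (1 / 2) * (y - z) ^ 2 / max y z ≤ y * Real.log (y / z) - y + z := by
  obtain ⟨hy0, hy1⟩ := hy
  obtain ⟨hz0, hz1⟩ := hz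
  rcases eq_or_lt_of_le hy0 with h0 | hy0'
  · subst h0
    rw [max_eq_right hz0.le]
    rw [div_le_iff₀ hz0]
    nlinarith
  · rcases le_total y z with hyz | hzy
    · -- y ≤ z, max = z
      have key := auxA (y / z) (div_pos hy0' hz0) ((div_le_one hz0).mpr hyz)
      have key' : (y ^ 2 - z ^ 2) / (2 * z) ≤ y * Real.log (y / z) := by
        have h := mul_le_mul_of_nonneg_left key hy0'.le
        have e : y * (y / z / 2 - 1 / (2 * (y / z))) = (y ^ 2 - z ^ 2) / (2 * z) := by
          field_simp
        linarith [e ▸ h]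
      rw [max_eq_right hyz]
      have e2 : (1 / 2) * (y - z) ^ 2 / z = (y ^ 2 - z ^ 2) / (2 * z) - y + z := by
        field_simp
        ring
      rw [e2]
      linarith [key']
    · -- z ≤ y, max = y
      have hB := auxB (y / z) ((one_le_div hz0).mpr hzy)
      have hB' := mul_le_mul_of_nonneg_left hB hz0.le
      have e1 : z * ((y / z - 1) ^ 2 / (2 * (y / z))) = (1 / 2) * (y - z) ^ 2 / y := by
        field_simp
      have e2 : z * ((y / z) * Real.log (y / z) - y / z + 1) = y * Real.log (y / z) - y + z := by
        field_simp
      rw [max_eq_left hzy, ← e1, ← e2]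
      exact hB'
end

section
/- Let q_{11}, q_{12}, q_{22} be real numbers and let u = (u_1, u_2) ∈ D (n = 2), u_0 = 1 − u_1 − u_2. Define q_1(u) = q_{11}u_1 + q_{12}u_1u_2, q_2(u) = q_{12}u_1u_2 + q_{22}u_2, and the 2×2 matrix A(u) with entries A_{11} = u_1(2q_{11} + q_{12}u_2(2−u_2) − 2q_1(u)), A_{12} = u_1(q_{12}u_1(1−u_1) − 2q_2(u)), A_{21} = u_2(q_{12}u_2(1−u_2) − 2q_1(u)), A_{22} = u_2(2q_{22} + q_{12}u_1(2−u_1) − 2q_2(u)). Let H(u) be the 2×2 matrix with entries H_ij = δ_ij/u_i + 1/u_0. Then H(u)·A(u) = [[2q_{11} + 2q_{12}u_2, q_{12}u_1],[q_{12}u_2, 2q_{22} + 2q_{12}u_1]]. -/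
open Matrix

/-- for the two-phase multiphase tissue model with pressures
`q_1(u) = q_{11}u_1 + q_{12}u_1u_2`, `q_2(u) = q_{12}u_1u_2 + q_{22}u_2`, the product
of the entropy Hessian `H(u)` with the diffusion matrix `A(u)` equals
`[[2q_{11} + 2q_{12}u_2, q_{12}u_1],[q_{12}u_2, 2q_{22} + 2q_{12}u_1]]`. -/
theorem multiphase_HA (q11 q12 q22 u1 u2 : ℝ)
    (h1 : 0 < u1 ∧ u1 < 1) (h2 : 0 < u2 ∧ u2 < 1) (h12 : u1 + u2 < 1) :
    let u0 : ℝ := 1 - u1 - u2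
    let q1 : ℝ := q11 * u1 + q12 * u1 * u2
    let q2 : ℝ := q12 * u1 * u2 + q22 * u2
    let A : Matrix (Fin 2) (Fin 2) ℝ :=
      !![u1 * (2 * q11 + q12 * u2 * (2 - u2) - 2 * q1),
         u1 * (q12 * u1 * (1 - u1) - 2 * q2);
         u2 * (q12 * u2 * (1 - u2) - 2 * q1),
         u2 * (2 * q22 + q12 * u1 * (2 - u1) - 2 * q2)]
    let H : Matrix (Fin 2) (Fin 2) ℝ :=
      !![1 / u1 + 1 / u0, 1 / u0; 1 / u0, 1 / u2 + 1 / u0]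
    H * A = !![2 * q11 + 2 * q12 * u2, q12 * u1;
               q12 * u2, 2 * q22 + 2 * q12 * u1] := by
  intro u0 q1 q2 A H
  have hu1 : u1 ≠ 0 := ne_of_gt h1.1
  have hu2 : u2 ≠ 0 := ne_of_gt h2.1
  have hu0 : u0 ≠ 0 := by simp only [u0]; nlinarith
  ext i j
  fin_cases i <;> fin_cases j <;>
    simp [A, H, Matrix.mul_apply, Fin.sum_univ_two] <;>
    field_simp <;> ring
end

section
/- Let q_{11}, q_{22}, q_{12} > 0 with 16·q_{11}·q_{22} > q_{12}², and let u_1, u_2 ≥ 0 with u_1 + u_2 ≤ 1. Define M(u) = [[2q_{11} + 2q_{12}u_2, q_{12}u_1],[q_{12}u_2, 2q_{22} + 2q_{12}u_1]]. Then the determinant of the symmetric part (1/2)(M(u) + M(u)^T) equals 4q_{11}q_{22} + 4q_{12}(q_{11}u_1 + q_{22}u_2) + (7/2)q_{12}²u_1u_2 − (1/4)q_{12}²(u_1² + u_2²), this determinant is at least 4q_{11}q_{22} − (1/4)q_{12}² > 0, and consequently z^T M(u) z > 0 for every nonzero z ∈ ℝ². -/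
open Matrix

private lemma quad_pos_aux (a b d x y : ℝ) (ha : 0 < a)
    (hdisc : 0 < a * d - b ^ 2) (hxy : x ≠ 0 ∨ y ≠ 0) :
    0 < a * x ^ 2 + 2 * b * (x * y) + d * y ^ 2 := by
  rcases ne_or_eq y 0 with h | h
  · nlinarith [sq_nonneg (a * x + b * y), mul_pos hdisc (sq_pos_of_ne_zero h)]
  · rcases hxy with h0 | h0
    · subst h
      have := mul_pos ha (sq_pos_of_ne_zero h0)
      nlinarith
    · exact absurd h h0

/-- for `q_{11}, q_{22}, q_{12} > 0` with `16q_{11}q_{22} > q_{12}²` and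
`u_1, u_2 ≥ 0`, `u_1 + u_2 ≤ 1`, the determinant of the symmetric part of
`M(u) = [[2q_{11}+2q_{12}u_2, q_{12}u_1],[q_{12}u_2, 2q_{22}+2q_{12}u_1]]` equals the
stated polynomial, is at least `4q_{11}q_{22} - q_{12}²/4 > 0`, and `zᵀM(u)z > 0` for
every nonzero `z ∈ ℝ²`. -/
theorem multiphase_positive_definiteness (q11 q12 q22 : ℝ)
    (hq11 : 0 < q11) (hq12 : 0 < q12) (hq22 : 0 < q22)
    (hq : q12 ^ 2 < 16 * q11 * q22)
    (u1 u2 : ℝ) (h1 : 0 ≤ u1) (h2 : 0 ≤ u2) (h12 : u1 + u2 ≤ 1) :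
    let M : Matrix (Fin 2) (Fin 2) ℝ :=
      !![2 * q11 + 2 * q12 * u2, q12 * u1; q12 * u2, 2 * q22 + 2 * q12 * u1]
    ((1 / 2 : ℝ) • (M + Mᵀ)).det =
        4 * q11 * q22 + 4 * q12 * (q11 * u1 + q22 * u2)
          + (7 / 2) * q12 ^ 2 * u1 * u2 - (1 / 4) * q12 ^ 2 * (u1 ^ 2 + u2 ^ 2) ∧
      4 * q11 * q22 - (1 / 4) * q12 ^ 2 ≤ ((1 / 2 : ℝ) • (M + Mᵀ)).det ∧
      0 < 4 * q11 * q22 - (1 / 4) * q12 ^ 2 ∧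
      ∀ z : Fin 2 → ℝ, z ≠ 0 → 0 < z ⬝ᵥ M.mulVec z := by
  intro M
  have hMT : Mᵀ = !![2 * q11 + 2 * q12 * u2, q12 * u2;
      q12 * u1, 2 * q22 + 2 * q12 * u1] := by
    ext i j
    fin_cases i <;> fin_cases j <;> rfl
  have hS : (1 / 2 : ℝ) • (M + Mᵀ) =
      !![2 * q11 + 2 * q12 * u2, q12 * (u1 + u2) / 2;
         q12 * (u1 + u2) / 2, 2 * q22 + 2 * q12 * u1] := by
    rw [hMT]
    ext i j
    fin_cases i <;> fin_cases j <;> simp [M] <;> ring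
  have hdet : ((1 / 2 : ℝ) • (M + Mᵀ)).det =
      4 * q11 * q22 + 4 * q12 * (q11 * u1 + q22 * u2)
        + (7 / 2) * q12 ^ 2 * u1 * u2 - (1 / 4) * q12 ^ 2 * (u1 ^ 2 + u2 ^ 2) := by
    rw [hS, Matrix.det_fin_two_of]
    ring
  have hsq : u1 ^ 2 + u2 ^ 2 ≤ 1 := by nlinarith [mul_nonneg h1 h2]
  have hlow : 4 * q11 * q22 - (1 / 4) * q12 ^ 2 ≤
      4 * q11 * q22 + 4 * q12 * (q11 * u1 + q22 * u2)
        + (7 / 2) * q12 ^ 2 * u1 * u2 - (1 / 4) * q12 ^ 2 * (u1 ^ 2 + u2 ^ 2) := by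
    nlinarith [mul_nonneg h1 h2, mul_nonneg (mul_nonneg hq12.le hq11.le) h1,
      mul_nonneg (mul_nonneg hq12.le hq22.le) h2, sq_nonneg q12]
  have hq' : 0 < 4 * q11 * q22 - (1 / 4) * q12 ^ 2 := by nlinarith
  refine ⟨hdet, hdet ▸ hlow, hq', ?_⟩
  intro z hz
  have hQ : z ⬝ᵥ M.mulVec z =
      (2 * q11 + 2 * q12 * u2) * z 0 ^ 2
        + 2 * (q12 * (u1 + u2) / 2) * (z 0 * z 1)
        + (2 * q22 + 2 * q12 * u1) * z 1 ^ 2 := by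
    simp [M, Matrix.mulVec, dotProduct, Fin.sum_univ_two]
    ring
  rw [hQ]
  refine quad_pos_aux _ _ _ _ _ (by positivity) ?_ ?_
  · have : (2 * q11 + 2 * q12 * u2) * (2 * q22 + 2 * q12 * u1)
        - (q12 * (u1 + u2) / 2) ^ 2 =
        4 * q11 * q22 + 4 * q12 * (q11 * u1 + q22 * u2)
          + (7 / 2) * q12 ^ 2 * u1 * u2 - (1 / 4) * q12 ^ 2 * (u1 ^ 2 + u2 ^ 2) := by
      ring
    rw [this]
    linarith
  · by_contra hc
    push_neg at hc
    exact hz (funext fun i => by fin_cases i <;> simp [hc.1, hc.2])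
end

section
/- Let β, θ be real numbers and let u = (u_1, u_2) ∈ D (n = 2), u_0 = 1 − u_1 − u_2. Define the 2×2 matrix A(u) with entries A_{11} = 2u_1(1−u_1) − βθu_1u_2², A_{12} = −2βu_1u_2(1+θu_1), A_{21} = −2u_1u_2 + βθ(1−u_2)u_2², A_{22} = 2βu_2(1−u_2)(1+θu_1), and let H(u) have entries H_ij = δ_ij/u_i + 1/u_0. Then H(u)·A(u) = [[2, 0],[βθu_2, 2β(1+θu_1)]]. -/
open Matrix

/-- for the Jackson–Byrne tumor-growth model, the product of the entropy
Hessian `H(u)` with the diffusion matrix `A(u)` equals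
`[[2, 0],[βθu_2, 2β(1+θu_1)]]`. -/
theorem tumor_growth_HA (β θ u1 u2 : ℝ)
    (h1 : 0 < u1 ∧ u1 < 1) (h2 : 0 < u2 ∧ u2 < 1) (h12 : u1 + u2 < 1) :
    let u0 : ℝ := 1 - u1 - u2
    let A : Matrix (Fin 2) (Fin 2) ℝ :=
      !![2 * u1 * (1 - u1) - β * θ * u1 * u2 ^ 2,
         -(2 * β * u1 * u2 * (1 + θ * u1));
         -(2 * u1 * u2) + β * θ * (1 - u2) * u2 ^ 2,
         2 * β * u2 * (1 - u2) * (1 + θ * u1)]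
    let H : Matrix (Fin 2) (Fin 2) ℝ :=
      !![1 / u1 + 1 / u0, 1 / u0; 1 / u0, 1 / u2 + 1 / u0]
    H * A = !![2, 0; β * θ * u2, 2 * β * (1 + θ * u1)] := by
  intro u0 A H
  have hu1 : u1 ≠ 0 := ne_of_gt h1.1
  have hu2 : u2 ≠ 0 := ne_of_gt h2.1
  have hu0 : u0 ≠ 0 := by simp only [u0]; linarith
  simp only [A, H]
  ext i j
  fin_cases i <;> fin_cases j <;>
    simp [Matrix.mul_apply, Fin.sum_univ_two] <;>
    field_simp <;> ring
end

section
/- Let β > 0 and 0 < θ < 4/√β. Then there exists a constant c > 0 such that for all u_1, u_2 ≥ 0 with u_1 + u_2 ≤ 1 and all z = (z_1, z_2) ∈ ℝ²: 2z_1² + βθu_2·z_1z_2 + 2β(1+θu_1)·z_2² ≥ c·(z_1² + z_2²). (This is the positive-definiteness hypothesis (H3) with s = 1 for the matrix H(u)A(u) = [[2,0],[βθu_2, 2β(1+θu_1)]] of the tumor-growth model.) -/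
/-- for `β > 0` and `0 < θ < 4/√β` there is `c > 0` such that for all
`u_1, u_2 ≥ 0` with `u_1 + u_2 ≤ 1` and all `(z_1, z_2) ∈ ℝ²`:
`2z_1² + βθu_2 z_1 z_2 + 2β(1+θu_1)z_2² ≥ c(z_1² + z_2²)`. -/
theorem tumor_growth_positive_definiteness (β θ : ℝ) (hβ : 0 < β)
    (hθ : 0 < θ) (hθβ : θ < 4 / Real.sqrt β) :
    ∃ c > 0, ∀ u1 u2 : ℝ, 0 ≤ u1 → 0 ≤ u2 → u1 + u2 ≤ 1 →
      ∀ z1 z2 : ℝ,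
        c * (z1 ^ 2 + z2 ^ 2) ≤
          2 * z1 ^ 2 + β * θ * u2 * z1 * z2 + 2 * β * (1 + θ * u1) * z2 ^ 2 := by
  set s := Real.sqrt β with hs
  have hs0 : 0 < s := Real.sqrt_pos.mpr hβ
  have hs2 : s ^ 2 = β := Real.sq_sqrt hβ.le
  have ht4 : θ * s < 4 := (lt_div_iff₀ hs0).mp hθβ
  have ht0 : 0 < θ * s := mul_pos hθ hs0
  set m := min 1 β with hm
  have hm0 : 0 < m := lt_min one_pos hβ
  have hm1 : m ≤ 1 := min_le_left _ _
  have hm2 : m ≤ β := min_le_right _ _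
  refine ⟨m * (4 - θ * s) / 2, div_pos (mul_pos hm0 (by linarith)) two_pos, ?_⟩
  intro u1 u2 hu1 hu2 hsum z1 z2
  have hu2' : u2 ≤ 1 := by linarith
  have hm2' : m ≤ s ^ 2 := by rw [hs2]; exact hm2
  rw [← hs2]
  nlinarith [mul_nonneg (mul_nonneg ht0.le (by linarith : (0:ℝ) ≤ 1 + u2)) (sq_nonneg (z1 + s * z2)),
    mul_nonneg (mul_nonneg ht0.le (by linarith : (0:ℝ) ≤ 1 - u2)) (sq_nonneg (z1 - s * z2)),
    mul_nonneg (by linarith : (0:ℝ) ≤ 4 - θ * s) (mul_nonneg (sub_nonneg.mpr hm1) (sq_nonneg z1)),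
    mul_nonneg (by linarith : (0:ℝ) ≤ 4 - θ * s) (mul_nonneg (sub_nonneg.mpr hm2') (sq_nonneg z2)),
    mul_nonneg (mul_nonneg (mul_nonneg (sq_nonneg s) hθ.le) hu1) (sq_nonneg z2)]
end

section
/- Let n ≥ 1 and let P = (p_ij) ∈ ℝ^{n×n} be symmetric. For u ∈ D define p_j(u) = Σ_{k=1}^n p_{jk} u_k and the matrix A(u) ∈ ℝ^{n×n} with entries A_ij(u) = u_i(p_ij − p_j(u)). Let H(u) have entries H_ij = δ_ij/u_i + 1/u_0. Then H(u)·A(u) = P; in particular, if P is positive definite then the modified Busenberg–Travis model satisfies the positive-definiteness hypothesis (H3) with s = 1. -/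
open Matrix

/-- for the modified Busenberg–Travis model with symmetric `P = (p_ij)`,
`A_ij(u) = u_i(p_ij - p_j(u))`, `p_j(u) = ∑_k p_jk u_k`, one has `H(u)·A(u) = P` for
every `u ∈ D`; in particular, if `P` is positive definite then hypothesis (H3) holds
with `s = 1` (uniformly on `D`). -/
theorem busenberg_travis_HA (n : ℕ) (hn : 1 ≤ n)
    (P : Matrix (Fin n) (Fin n) ℝ) (hP : P.IsSymm) :
    let D : Set (Fin n → ℝ) := {u | (∀ i, 0 < u i ∧ u i < 1) ∧ ∑ i, u i < 1}
    let H : (Fin n → ℝ) → Matrix (Fin n) (Fin n) ℝ := fun u =>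
      Matrix.of fun i j => (if i = j then 1 / u i else 0) + 1 / (1 - ∑ k, u k)
    let A : (Fin n → ℝ) → Matrix (Fin n) (Fin n) ℝ := fun u =>
      Matrix.of fun i j => u i * (P i j - ∑ k, P j k * u k)
    (∀ u ∈ D, H u * A u = P) ∧
      (P.PosDef → ∃ c > 0, ∀ u ∈ D, ∀ z : Fin n → ℝ,
        c * ∑ i, z i ^ 2 ≤ z ⬝ᵥ (H u * A u).mulVec z) := by
  intro D H A
  have key : ∀ u ∈ D, H u * A u = P := by
    intro u hu
    obtain ⟨hpos, hsum⟩ := hu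
    have hu0 : (1 : ℝ) - ∑ k, u k ≠ 0 := by
      have : (0:ℝ) < 1 - ∑ k, u k := by linarith
      exact this.ne'
    ext i j
    have hui : u i ≠ 0 := (hpos i).1.ne'
    simp only [Matrix.mul_apply, Matrix.of_apply, H, A]
    have expand : ∀ k : Fin n,
        ((if i = k then 1 / u i else 0) + 1 / (1 - ∑ m, u m)) *
          (u k * (P k j - ∑ m, P j m * u m))
        = (if i = k then (1 / u i) * (u k * (P k j - ∑ m, P j m * u m)) else 0)
          + (1 / (1 - ∑ m, u m)) * (u k * (P k j - ∑ m, P j m * u m)) := by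
      intro k
      rw [add_mul, ite_mul, zero_mul]
    rw [Finset.sum_congr rfl fun k _ => expand k, Finset.sum_add_distrib]
    have h1 : ∑ k, (if i = k then (1 / u i) * (u k * (P k j - ∑ m, P j m * u m)) else 0)
        = P i j - ∑ m, P j m * u m := by
      rw [Finset.sum_ite_eq]
      simp only [Finset.mem_univ, if_true]
      field_simp
    have h2 : ∑ k, (1 / (1 - ∑ m, u m)) * (u k * (P k j - ∑ m, P j m * u m))
        = ∑ m, P j m * u m := by
      rw [← Finset.mul_sum]
      have hsums : ∑ k, u k * (P k j - ∑ m, P j m * u m)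
          = (1 - ∑ k, u k) * ∑ m, P j m * u m := by
        have step : ∀ k : Fin n, u k * (P k j - ∑ m, P j m * u m)
            = P j k * u k - (∑ m, P j m * u m) * u k := by
          intro k
          rw [hP.apply j k]
          ring
        rw [Finset.sum_congr rfl fun k _ => step k, Finset.sum_sub_distrib,
          ← Finset.mul_sum]
        ring
      rw [hsums]
      field_simp
    rw [h1, h2]
    ring
  refine ⟨key, ?_⟩
  intro hPd
  -- reduce to a uniform lower bound for the quadratic form of `P`
  have hsq_pos : ∀ z : Fin n → ℝ, z ≠ 0 → 0 < ∑ i, z i ^ 2 := by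
    intro z hz
    obtain ⟨i0, hi0⟩ := Function.ne_iff.mp hz
    have hi0' : z i0 ≠ 0 := by simpa using hi0
    have : (0:ℝ) < z i0 ^ 2 := by positivity
    exact lt_of_lt_of_le this (Finset.single_le_sum (fun i _ => sq_nonneg (z i))
      (Finset.mem_univ i0))
  -- the unit sphere for the ℓ² sum of squares
  set S : Set (Fin n → ℝ) := {z | ∑ i, z i ^ 2 = 1} with hSdef
  have hScompact : IsCompact S := by
    apply Metric.isCompact_of_isClosed_isBounded
    · exact isClosed_eq (by continuity) continuous_const
    · rw [Metric.isBounded_iff_subset_closedBall 0]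
      refine ⟨1, fun z hz => ?_⟩
      simp only [Metric.mem_closedBall, dist_zero_right]
      rw [pi_norm_le_iff_of_nonneg zero_le_one]
      intro i
      have h1 : z i ^ 2 ≤ 1 := by
        have := Finset.single_le_sum (fun j (_ : j ∈ Finset.univ) => sq_nonneg (z j))
          (Finset.mem_univ i)
        rw [hz] at this
        exact this
      rw [Real.norm_eq_abs]
      nlinarith [abs_nonneg (z i), sq_abs (z i)]
  have hSne : S.Nonempty := by
    refine ⟨Pi.single ⟨0, hn⟩ 1, ?_⟩
    simp only [hSdef, Set.mem_setOf_eq, Pi.single_apply]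
    rw [Finset.sum_congr rfl fun k _ => by
      rw [show (if k = (⟨0, hn⟩ : Fin n) then (1:ℝ) else 0) ^ 2
          = if k = ⟨0, hn⟩ then 1 else 0 by split <;> norm_num]]
    simp
  have hfc : Continuous fun z : Fin n → ℝ => z ⬝ᵥ P.mulVec z := by
    simp only [dotProduct, Matrix.mulVec]
    exact continuous_finset_sum _ fun i _ => (continuous_apply i).mul
      (continuous_finset_sum _ fun j _ => continuous_const.mul (continuous_apply j))
  obtain ⟨m, hmS, hmin⟩ := hScompact.exists_isMinOn hSne hfc.continuousOn
  set c : ℝ := m ⬝ᵥ P.mulVec m with hc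
  have hm0 : m ≠ 0 := by
    intro h
    rw [hSdef] at hmS
    simp [h] at hmS
  have hcpos : 0 < c := by
    have := hPd.dotProduct_mulVec_pos hm0
    simpa using this
  refine ⟨c, hcpos, fun u hu z => ?_⟩
  rw [key u hu]
  by_cases hz : z = 0
  · simp [hz]
  · have hspos := hsq_pos z hz
    set r : ℝ := Real.sqrt (∑ i, z i ^ 2) with hr
    have hrpos : 0 < r := Real.sqrt_pos.mpr hspos
    have hr2 : r ^ 2 = ∑ i, z i ^ 2 := Real.sq_sqrt hspos.le
    set w : Fin n → ℝ := r⁻¹ • z with hw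
    have hwS : w ∈ S := by
      simp only [hSdef, Set.mem_setOf_eq, hw, Pi.smul_apply, smul_eq_mul, mul_pow,
        ← Finset.mul_sum]
      rw [← hr2]
      field_simp
    have hscale : w ⬝ᵥ P.mulVec w = r⁻¹ * r⁻¹ * (z ⬝ᵥ P.mulVec z) := by
      rw [hw, Matrix.mulVec_smul, smul_dotProduct, dotProduct_smul]
      simp [mul_assoc]
    have hmin' := hmin hwS
    have : c ≤ r⁻¹ * r⁻¹ * (z ⬝ᵥ P.mulVec z) := by
      rw [← hscale]; exact hmin'
    have hr2' : r * r = ∑ i, z i ^ 2 := by rw [← hr2]; ring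
    calc c * ∑ i, z i ^ 2 = c * (r * r) := by rw [hr2']
      _ ≤ (r⁻¹ * r⁻¹ * (z ⬝ᵥ P.mulVec z)) * (r * r) :=
          mul_le_mul_of_nonneg_right this (by positivity)
      _ = z ⬝ᵥ P.mulVec z := by field_simp
end

section
/- Let n ≥ 1 and let (a_ij)_{i,j=0,…,n} be real numbers with a_ij = a_ji. For u ∈ D define A(u) ∈ ℝ^{n×n} by A_ii(u) = Σ_{k=1,k≠i}^n (a_ik − a_i0)u_k + a_i0 and A_ij(u) = −(a_ij − a_i0)u_i for i ≠ j (i,j = 1,…,n), and set B(u) = A(u)·N(u) where N(u) has entries N_ij = δ_ij u_i − u_i u_j. Then the augmented matrix B̄(ū) ∈ ℝ^{(n+1)×(n+1)} satisfies B̄_ij(ū) = −a_ij u_i u_j for all i ≠ j with i,j ∈ {0,…,n}, and B̄_ii(ū) = u_i · Σ_{k=0,k≠i}^n a_ik u_k for all i ∈ {0,…,n}; in particular B̄_00(ū) = u_0 Σ_{k=1}^n a_{0k} u_k. -/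
open Matrix

/-- for the thin-film solar-cell model with symmetric coefficients
`a_ij` (`i,j = 0,…,n`) and diffusion matrix
`A_ii(u) = ∑_{k≠i}(a_ik - a_i0)u_k + a_i0`, `A_ij(u) = -(a_ij - a_i0)u_i` (`i ≠ j`),
the augmented mobility matrix `B̄ = augment (A·N)` satisfies
`B̄_ij = -a_ij u_i u_j` for `i ≠ j` and `B̄_ii = u_i ∑_{k≠i} a_ik u_k`;
in particular `B̄_00 = u_0 ∑_{k=1}^n a_0k u_k`. -/
theorem thin_film_mobility (n : ℕ) (hn : 1 ≤ n)
    (a : Fin (n + 1) → Fin (n + 1) → ℝ) (ha : ∀ i j, a i j = a j i)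
    (u : Fin n → ℝ) (hu : ∀ i, 0 < u i ∧ u i < 1) (hsum : ∑ i, u i < 1) :
    let u0 : ℝ := 1 - ∑ i, u i
    let ubar : Fin (n + 1) → ℝ := Fin.cons u0 u
    let A : Matrix (Fin n) (Fin n) ℝ := Matrix.of fun i j =>
      if i = j then
        (∑ k ∈ Finset.univ \ {i}, (a i.succ k.succ - a i.succ 0) * u k) + a i.succ 0
      else -(a i.succ j.succ - a i.succ 0) * u i
    let N : Matrix (Fin n) (Fin n) ℝ := Matrix.of fun i j =>
      (if i = j then u i else 0) - u i * u j
    let Bbar : Matrix (Fin (n + 1)) (Fin (n + 1)) ℝ := augment (A * N)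
    (∀ i j, i ≠ j → Bbar i j = -(a i j) * (ubar i * ubar j)) ∧
      (∀ i, Bbar i i = ubar i * ∑ k ∈ Finset.univ \ {i}, a i k * ubar k) ∧
      Bbar 0 0 = u0 * ∑ k : Fin n, a 0 k.succ * u k := by
  intro u0 ubar A N Bbar
  have hu0 : u0 = 1 - ∑ i, u i := rfl
  have hub0 : ubar 0 = u0 := rfl
  have hubs : ∀ i : Fin n, ubar i.succ = u i := fun i => Fin.cons_succ _ _ _
  have hAd : ∀ i : Fin n, A i i
      = (∑ k ∈ Finset.univ.erase i, (a i.succ k.succ - a i.succ 0) * u k) + a i.succ 0 := by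
    intro i
    simp [A, Finset.sdiff_singleton_eq_erase]
  have hAo : ∀ i j : Fin n, i ≠ j → A i j = -(a i.succ j.succ - a i.succ 0) * u i := by
    intro i j h
    simp [A, h]
  have hS : ∀ i : Fin n, ∑ k, A i k * u k = a i.succ 0 * u i := by
    intro i
    rw [← Finset.add_sum_erase _ _ (Finset.mem_univ i), hAd i]
    have h2 : ∑ k ∈ Finset.univ.erase i, A i k * u k
        = ∑ k ∈ Finset.univ.erase i, -((a i.succ k.succ - a i.succ 0) * u k * u i) := by
      refine Finset.sum_congr rfl fun k hk => ?_
      rw [hAo i k (Ne.symm (Finset.ne_of_mem_erase hk))]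
      ring
    rw [h2, Finset.sum_neg_distrib, ← Finset.sum_mul]
    ring
  have hB : ∀ i j : Fin n, (A * N) i j = A i j * u j - a i.succ 0 * u i * u j := by
    intro i j
    rw [Matrix.mul_apply]
    have h1 : ∀ k : Fin n, A i k * N k j
        = (if k = j then A i k * u k else 0) - A i k * u k * u j := by
      intro k
      have hN : N k j = (if k = j then u k else 0) - u k * u j := rfl
      rw [hN, mul_sub, mul_ite, mul_zero]
      ring
    simp only [h1]
    rw [Finset.sum_sub_distrib, Finset.sum_ite_eq' Finset.univ j (fun k => A i k * u k),
      ← Finset.sum_mul, hS]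
    simp
  have hBoff : ∀ i j : Fin n, i ≠ j → (A * N) i j = -(a i.succ j.succ) * u i * u j := by
    intro i j h
    rw [hB i j, hAo i j h]
    ring
  have hBdiag : ∀ i : Fin n, (A * N) i i
      = u i * ((∑ k ∈ Finset.univ.erase i, a i.succ k.succ * u k) + a i.succ 0 * u0) := by
    intro i
    rw [hB i i, hAd i]
    have h3 : ∑ k ∈ Finset.univ.erase i, (a i.succ k.succ - a i.succ 0) * u k
        = (∑ k ∈ Finset.univ.erase i, a i.succ k.succ * u k)
          - a i.succ 0 * ∑ k ∈ Finset.univ.erase i, u k := by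
      rw [Finset.mul_sum, ← Finset.sum_sub_distrib]
      exact Finset.sum_congr rfl fun k _ => by ring
    rw [h3, Finset.sum_erase_eq_sub (Finset.mem_univ i),
      Finset.sum_erase_eq_sub (Finset.mem_univ i), hu0]
    ring
  have hRow : ∀ i : Fin n, ∑ l, (A * N) i l = a i.succ 0 * u i * u0 := by
    intro i
    simp only [hB i]
    rw [Finset.sum_sub_distrib, hS, ← Finset.mul_sum, hu0]
    ring
  have hsymm : ∀ i j : Fin n, (A * N) i j = (A * N) j i := by
    intro i j
    rcases eq_or_ne i j with rfl | h
    · rfl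
    · rw [hBoff i j h, hBoff j i h.symm, ha i.succ j.succ]
      ring
  have hCol : ∀ j : Fin n, ∑ k, (A * N) k j = a j.succ 0 * u j * u0 := by
    intro j
    rw [← hRow j]
    exact Finset.sum_congr rfl fun k _ => hsymm k j
  have hb00 : Bbar 0 0 = ∑ k, ∑ l, (A * N) k l := by simp [Bbar, augment]
  have hb0s : ∀ j : Fin n, Bbar 0 j.succ = -∑ k, (A * N) k j := by
    intro j; simp [Bbar, augment]
  have hbs0 : ∀ i : Fin n, Bbar i.succ 0 = -∑ l, (A * N) i l := by
    intro i; simp [Bbar, augment]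
  have hbss : ∀ i j : Fin n, Bbar i.succ j.succ = (A * N) i j := by
    intro i j; simp [Bbar, augment]
  have hdiag0 : Bbar 0 0 = u0 * ∑ k : Fin n, a 0 k.succ * u k := by
    rw [hb00]
    have : ∀ k : Fin n, ∑ l, (A * N) k l = a k.succ 0 * u k * u0 := hRow
    simp only [this]
    rw [Finset.mul_sum]
    exact Finset.sum_congr rfl fun k _ => by rw [ha k.succ 0]; ring
  have hsumS : ∀ (i : Fin n) (f : Fin (n + 1) → ℝ),
      ∑ k ∈ Finset.univ \ {i.succ}, f k = f 0 + ∑ k ∈ Finset.univ.erase i, f k.succ := by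
    intro i f
    rw [Finset.sdiff_singleton_eq_erase, Finset.sum_erase_eq_sub (Finset.mem_univ _),
      Fin.sum_univ_succ, Finset.sum_erase_eq_sub (Finset.mem_univ i)]
    ring
  have hsum0 : ∀ f : Fin (n + 1) → ℝ,
      ∑ k ∈ Finset.univ \ {(0 : Fin (n + 1))}, f k = ∑ k : Fin n, f k.succ := by
    intro f
    rw [Finset.sdiff_singleton_eq_erase, Finset.sum_erase_eq_sub (Finset.mem_univ _),
      Fin.sum_univ_succ]
    ring
  refine ⟨?_, ?_, hdiag0⟩
  · intro i j hij
    rcases Fin.eq_zero_or_eq_succ i with rfl | ⟨i', rfl⟩ <;>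
      rcases Fin.eq_zero_or_eq_succ j with rfl | ⟨j', rfl⟩
    · exact absurd rfl hij
    · rw [hb0s j', hCol j', hub0, hubs j', ha 0 j'.succ]
      ring
    · rw [hbs0 i', hRow i', hub0, hubs i']
      ring
    · have h' : i' ≠ j' := fun h => hij (congrArg Fin.succ h)
      rw [hbss i' j', hBoff i' j' h', hubs i', hubs j']
      ring
  · intro i
    rcases Fin.eq_zero_or_eq_succ i with rfl | ⟨i', rfl⟩
    · rw [hdiag0, hsum0 (fun k => a 0 k * ubar k), hub0]
      exact congrArg _ (Finset.sum_congr rfl fun k _ => by rw [hubs k])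
    · rw [hbss i' i', hBdiag i', hsumS i' (fun k => a i'.succ k * ubar k), hub0, hubs i']
      have : ∑ k ∈ Finset.univ.erase i', a i'.succ k.succ * ubar k.succ
          = ∑ k ∈ Finset.univ.erase i', a i'.succ k.succ * u k :=
        Finset.sum_congr rfl fun k _ => by rw [hubs k]
      rw [this]
      ring
end

section
/- Let n ≥ 1, let d_1, …, d_n > 0, and let u ∈ D with u_0 = 1 − Σ_{i=1}^n u_i. Define B̄(ū) ∈ ℝ^{(n+1)×(n+1)} (indices 0,…,n) by B̄_ij = d_i u_i δ_ij for i,j = 1,…,n, B̄_0j = B̄_j0 = −d_j u_j for j = 1,…,n, and B̄_00 = Σ_{i=1}^n d_i u_i, and let G(ū) have entries G_ij = B̄_ij/√(u_i u_j). Then for every z = (z_0,…,z_n) ∈ ℝ^{n+1} with Σ_{i=0}^n √u_i z_i = 0: z^T G(ū) z ≥ c_A·(Σ_{i=1}^n z_i² + z_0²/u_0), where c_A = min_{i=1,…,n} d_i. -/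
open Matrix

/-- for the ion-channel model with augmented mobility matrix
`B̄_ij = d_i u_i δ_ij` (`i,j ≥ 1`), `B̄_0j = B̄_j0 = -d_j u_j`, `B̄_00 = ∑ d_i u_i`,
and `G_ij = B̄_ij/√(u_i u_j)`, every `z` with `∑ √u_i z_i = 0` satisfies
`zᵀ G(ū) z ≥ c_A (∑_{i≥1} z_i² + z_0²/u_0)` with `c_A = min_i d_i`. -/
theorem ion_channel_improved_positivity (n : ℕ) (hn : 1 ≤ n)
    (d : Fin n → ℝ) (hd : ∀ i, 0 < d i)
    (u : Fin n → ℝ) (hu : ∀ i, 0 < u i ∧ u i < 1) (hsum : ∑ i, u i < 1) :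
    let u0 : ℝ := 1 - ∑ i, u i
    let ubar : Fin (n + 1) → ℝ := Fin.cons u0 u
    let Bbar : Matrix (Fin (n + 1)) (Fin (n + 1)) ℝ := Matrix.of fun i j =>
      Fin.cases
        (Fin.cases (∑ k, d k * u k) (fun l => -(d l * u l)) j)
        (fun k => Fin.cases (-(d k * u k))
          (fun l => if k = l then d k * u k else 0) j) i
    let G : Matrix (Fin (n + 1)) (Fin (n + 1)) ℝ :=
      Matrix.of fun i j => Bbar i j / Real.sqrt (ubar i * ubar j)
    ∀ z : Fin (n + 1) → ℝ, (∑ i, Real.sqrt (ubar i) * z i = 0) →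
      (Finset.univ.inf' ⟨⟨0, hn⟩, Finset.mem_univ _⟩ d) *
          ((∑ i : Fin n, z i.succ ^ 2) + z 0 ^ 2 / u0) ≤ z ⬝ᵥ G.mulVec z := by
  intro u0 ubar Bbar G z hz
  have hu0 : 0 < u0 := by simp only [u0]; linarith
  set s := Real.sqrt u0 with hs_def
  have hs : 0 < s := Real.sqrt_pos.mpr hu0
  have hss : s * s = u0 := Real.mul_self_sqrt hu0.le
  have hsq : ∀ i, Real.sqrt (u i) * Real.sqrt (u i) = u i :=
    fun i => Real.mul_self_sqrt (hu i).1.le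
  have hsqpos : ∀ i, 0 < Real.sqrt (u i) := fun i => Real.sqrt_pos.mpr (hu i).1
  -- constraint
  have hz' : ∑ i : Fin n, Real.sqrt (u i) * z i.succ = -(s * z 0) := by
    rw [Fin.sum_univ_succ] at hz
    simp only [ubar, Fin.cons_zero, Fin.cons_succ] at hz
    linarith
  set c := Finset.univ.inf' ⟨⟨0, hn⟩, Finset.mem_univ _⟩ d with hc_def
  have hc_le : ∀ i, c ≤ d i := fun i => Finset.inf'_le _ (Finset.mem_univ i)
  have hc_pos : 0 < c := by
    obtain ⟨i, -, hi⟩ := Finset.exists_mem_eq_inf' ⟨⟨0, hn⟩, Finset.mem_univ _⟩ d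
    rw [hc_def, hi]; exact hd i
  -- quadratic form identity
  have hQF : z ⬝ᵥ G.mulVec z
      = ∑ i : Fin n, d i * (z i.succ - z 0 * Real.sqrt (u i) / s) ^ 2 := by
    simp only [dotProduct, mulVec, G, Bbar, ubar, Matrix.of_apply,
      Fin.sum_univ_succ, Fin.cases_zero, Fin.cases_succ, Fin.cons_zero, Fin.cons_succ]
    have hinner : ∀ i : Fin n,
        ∑ j, (if i = j then d i * u i else 0) / Real.sqrt (u i * u j) * z j.succ
          = d i * z i.succ := by
      intro i
      rw [Finset.sum_eq_single i]
      · rw [if_pos rfl]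
        rw [show Real.sqrt (u i * u i) = u i from by
          rw [Real.sqrt_mul_self (hu i).1.le]]
        field_simp [(hu i).1.ne']
      · intro j _ hj
        rw [if_neg (Ne.symm hj), zero_div, zero_mul]
      · intro h; exact absurd (Finset.mem_univ i) h
    simp only [hinner]
    have e1 : Real.sqrt (u0 * u0) = u0 := Real.sqrt_mul_self hu0.le
    have e2 : ∀ i, Real.sqrt (u0 * u i) = s * Real.sqrt (u i) :=
      fun i => Real.sqrt_mul hu0.le _
    have e3 : ∀ i, Real.sqrt (u i * u0) = Real.sqrt (u i) * s := by
      intro i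
      rw [mul_comm, e2 i, mul_comm]
    rw [e1]
    simp only [e2, e3, Finset.sum_div, Finset.sum_mul]
    rw [mul_add, Finset.mul_sum, Finset.mul_sum, add_assoc, ← Finset.sum_add_distrib,
      ← Finset.sum_add_distrib]
    refine Finset.sum_congr rfl fun i _ => ?_
    rw [← hss, ← hsq i]
    have h1 : Real.sqrt (u i) ≠ 0 := (hsqpos i).ne'
    have h2 : s ≠ 0 := hs.ne'
    field_simp
    rw [Real.sqrt_sq (hsqpos i).le]
    ring
  rw [hQF]
  have step2 : (∑ i : Fin n, z i.succ ^ 2) + z 0 ^ 2 / u0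
      ≤ ∑ i : Fin n, (z i.succ - z 0 * Real.sqrt (u i) / s) ^ 2 := by
    have expand : ∑ i : Fin n, (z i.succ - z 0 * Real.sqrt (u i) / s) ^ 2
        = (∑ i : Fin n, z i.succ ^ 2) - (2 * z 0 / s) * ∑ i : Fin n, Real.sqrt (u i) * z i.succ
          + (z 0 ^ 2 / u0) * ∑ i, u i := by
      rw [Finset.mul_sum, Finset.mul_sum, ← Finset.sum_sub_distrib, ← Finset.sum_add_distrib]
      refine Finset.sum_congr rfl fun i _ => ?_
      have h1 : Real.sqrt (u i) ≠ 0 := (hsqpos i).ne'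
      have h2 : s ≠ 0 := hs.ne'
      rw [← hss, ← hsq i]
      field_simp
      rw [Real.sqrt_sq (hsqpos i).le]
      ring
    rw [expand, hz']
    have husum : ∑ i, u i = 1 - u0 := by simp only [u0]; ring
    rw [husum]
    have ha : 2 * z 0 / s * -(s * z 0) = -(2 * z 0 ^ 2) := by
      field_simp
    have hb : z 0 ^ 2 / u0 * (1 - u0) = z 0 ^ 2 / u0 - z 0 ^ 2 := by
      field_simp
    nlinarith [sq_nonneg (z 0)]
  calc c * ((∑ i : Fin n, z i.succ ^ 2) + z 0 ^ 2 / u0)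
      ≤ c * ∑ i : Fin n, (z i.succ - z 0 * Real.sqrt (u i) / s) ^ 2 :=
        mul_le_mul_of_nonneg_left step2 hc_pos.le
    _ ≤ ∑ i : Fin n, d i * (z i.succ - z 0 * Real.sqrt (u i) / s) ^ 2 := by
        rw [Finset.mul_sum]
        exact Finset.sum_le_sum fun i _ =>
          mul_le_mul_of_nonneg_right (hc_le i) (sq_nonneg _)
end
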